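/- Let c₁ > 0, let ω_m : ℝ → ℝ³ be continuous, let b̂ : ℝ → ℝ³ be continuous, let b^g ∈ ℝ³, and let q, q̂ : ℝ → ℍ be differentiable with q̂(t) ≠ 0 for all t, satisfying dq/dt = (1/2) q ⊗ (0, ω_m − b^g) and dq̂/dt = (1/2) q̂ ⊗ ((0, ω_m − b̂) + 2c₁ (1 − |q_e°|, sgn(q_e°) q⃗_e)), where q_e = q̂⁻¹ ⊗ q. Then the vector part of the error quaternion satisfies (d/dt) q⃗_e = q⃗_e × ω_m − (1/2) q⃗_e × (b^g + b̂) − (1/2) q_e° (b^g − b̂) − c₁ q⃗_e. -/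

import Mathlib

open Filter Real Topology

noncomputable section

/-- ℝ³ with the Euclidean norm. -/
abbrev E3 := EuclideanSpace ℝ (Fin 3)

/-- Cross product on ℝ³. -/
def cross (u v : E3) : E3 :=
  WithLp.toLp 2 ![u 1 * v 2 - u 2 * v 1, u 2 * v 0 - u 0 * v 2, u 0 * v 1 - u 1 * v 0]

/-- The quaternion with real (scalar) part `a` and vector (imaginary) part `v`. -/
def quat (a : ℝ) (v : E3) : Quaternion ℝ := ⟨a, v 0, v 1, v 2⟩

/-- The vector (imaginary) part of a quaternion, as an element of ℝ³. -/
def qvec (q : Quaternion ℝ) : E3 := WithLp.toLp 2 ![q.imI, q.imJ, q.imK]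

/-!
If `q' = q A` and `q̂' = q̂ B`, then `e = q̂⁻¹ q` obeys `e' = e A - B e`, which only uses
`(q̂⁻¹)' = -q̂⁻¹ q̂' q̂⁻¹`. For pure `A = (0, u)` and `B = (0, v)` the vector part of `e A - B e`
is `e° (u - v) + e⃗ × (u + v)`. The observer's correction `(1 - |e°|, sgn(e°) e⃗)` contributes
exactly `e⃗`, because `(1 - |e°|) + sgn(e°) e° = 1` and `e⃗ × e⃗ = 0`.
-/

lemma Real.sign_mul_self_eq_abs (x : ℝ) : Real.sign x * x = |x| := by
  rcases lt_trichotomy x 0 with h | rfl | h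
  · simp [Real.sign_of_neg h, abs_of_neg h]
  · simp
  · simp [Real.sign_of_pos h, abs_of_pos h]

section DivisionAlgebra

variable {𝕜 R : Type*} [NontriviallyNormedField 𝕜] [NormedDivisionRing R] [NormedAlgebra 𝕜 R]
  {x y : 𝕜 → R} {t : 𝕜}

theorem HasDerivAt.inv' {x' : R} (hx : HasDerivAt x x' t) (h0 : x t ≠ 0) :
    HasDerivAt (fun s => (x s)⁻¹) (-((x t)⁻¹ * x' * (x t)⁻¹)) t := by
  have h := (hasFDerivAt_inv' (𝕜 := 𝕜) h0).comp_hasDerivAt t hx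
  rwa [neg_apply, ContinuousLinearMap.mulLeftRight_apply] at h

theorem HasDerivAt.inv_mul_of_right_mul {A C : R} (hx : HasDerivAt x (x t * A) t)
    (hy : HasDerivAt y (y t * C) t) (h0 : x t ≠ 0) :
    HasDerivAt (fun s => (x s)⁻¹ * y s) ((x t)⁻¹ * y t * C - A * ((x t)⁻¹ * y t)) t := by
  convert (hx.inv' h0).fun_mul hy using 1
  rw [mul_assoc (x t)⁻¹, inv_mul_cancel_left₀ h0]
  noncomm_ring

end DivisionAlgebra

section QuaternionCoordinates

variable (a : ℝ) (v : E3)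

@[simp] lemma re_quat : (quat a v).re = a := rfl
@[simp] lemma imI_quat : (quat a v).imI = v 0 := rfl
@[simp] lemma imJ_quat : (quat a v).imJ = v 1 := rfl
@[simp] lemma imK_quat : (quat a v).imK = v 2 := rfl

end QuaternionCoordinates

def qvecCLM : Quaternion ℝ →L[ℝ] E3 :=
  LinearMap.toContinuousLinearMap
    { toFun := qvec
      map_add' := fun a b => by ext i; fin_cases i <;> simp [qvec]
      map_smul' := fun c a => by ext i; fin_cases i <;> simp [qvec] }

@[simp] lemma qvecCLM_apply (p : Quaternion ℝ) : qvecCLM p = qvec p := rfl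

lemma cross_add_right (u v w : E3) : cross u (v + w) = cross u v + cross u w := by
  ext i; fin_cases i <;> simp [cross] <;> ring

lemma cross_sub_right (u v w : E3) : cross u (v - w) = cross u v - cross u w := by
  ext i; fin_cases i <;> simp [cross] <;> ring

lemma qvec_mul_quat_zero_sub_quat_zero_mul (p : Quaternion ℝ) (u v : E3) :
    qvec (p * quat 0 u - quat 0 v * p) = p.re • (u - v) + cross (qvec p) (u + v) := by
  ext i
  fin_cases i <;>
    simp [qvec, cross, Quaternion.imI_mul, Quaternion.imJ_mul, Quaternion.imK_mul] <;> ring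

lemma qvec_quat_smul_qvec_mul (p : Quaternion ℝ) (a s : ℝ) :
    qvec (quat a (s • qvec p) * p) = (a + s * p.re) • qvec p := by
  ext i
  fin_cases i <;> simp [qvec, Quaternion.imI_mul, Quaternion.imJ_mul, Quaternion.imK_mul] <;> ring

theorem stmt_15 (c₁ : ℝ)
    (ωm bh : ℝ → E3) (bg : E3)
    (q qh : ℝ → Quaternion ℝ)
    (hne : ∀ t, qh t ≠ 0)
    (hqdot : ∀ t, HasDerivAt q ((2⁻¹ : ℝ) • (q t * quat 0 (ωm t - bg))) t)
    (hqhdot : ∀ t, HasDerivAt qh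
      ((2⁻¹ : ℝ) • (qh t *
        (quat 0 (ωm t - bh t) +
          (2 * c₁) • quat (1 - |((qh t)⁻¹ * q t).re|)
            (Real.sign ((qh t)⁻¹ * q t).re • qvec ((qh t)⁻¹ * q t))))) t) :
    ∀ t, HasDerivAt (fun s => qvec ((qh s)⁻¹ * q s))
      (cross (qvec ((qh t)⁻¹ * q t)) (ωm t)
        - (2⁻¹ : ℝ) • cross (qvec ((qh t)⁻¹ * q t)) (bg + bh t)
        - (((qh t)⁻¹ * q t).re / 2) • (bg - bh t)
        - c₁ • qvec ((qh t)⁻¹ * q t)) t := by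
  intro t
  set e := (qh t)⁻¹ * q t
  set K := quat (1 - |e.re|) (Real.sign e.re • qvec e)
  have herr : HasDerivAt (fun s => (qh s)⁻¹ * q s)
      (e * ((2⁻¹ : ℝ) • quat 0 (ωm t - bg))
        - ((2⁻¹ : ℝ) • (quat 0 (ωm t - bh t) + (2 * c₁) • K)) * e) t :=
    HasDerivAt.inv_mul_of_right_mul (by simpa only [mul_smul_comm] using hqhdot t)
      (by simpa only [mul_smul_comm] using hqdot t) (hne t)
  refine (qvecCLM.hasFDerivAt.comp_hasDerivAt t herr).congr_deriv ?_
  have hsplit : e * ((2⁻¹ : ℝ) • quat 0 (ωm t - bg))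
        - ((2⁻¹ : ℝ) • (quat 0 (ωm t - bh t) + (2 * c₁) • K)) * e
      = (2⁻¹ : ℝ) • (e * quat 0 (ωm t - bg) - quat 0 (ωm t - bh t) * e) - c₁ • (K * e) := by
    simp only [mul_smul_comm, smul_mul_assoc, add_mul, smul_add]
    module
  have hcorrection : qvec (K * e) = qvec e := by
    rw [qvec_quat_smul_qvec_mul, Real.sign_mul_self_eq_abs, sub_add_cancel, one_smul]
  rw [hsplit, map_sub, map_smul, map_smul, qvecCLM_apply, qvecCLM_apply,
    qvec_mul_quat_zero_sub_quat_zero_mul, hcorrection]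
  simp only [cross_add_right, cross_sub_right]
  module
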